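/- Let d_z ≥ 1, N ≥ 1 be integers and σ_w > 0, σ_max > 0 reals. Let k : ℝ^{d_z} × ℝ^{d_z} → ℝ be a symmetric positive semidefinite kernel with k(z, z) ≤ σ_max for all z. Fix points z_1, …, z_N ∈ ℝ^{d_z}. For t = 1, …, N let σ_{t−1}²(z_t) denote the Gaussian process posterior variance at z_t computed from the first t − 1 points (with σ_0²(z_1) := k(z_1, z_1)), and let K_N be the N×N Gram matrix (K_N)_{ij} = k(z_i, z_j). Then ∑_{t=1}^{N} σ_{t−1}²(z_t) ≤ ( σ_max / log(1 + σ_w⁻² σ_max) ) · log det( I_N + σ_w⁻² K_N ). -/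

import Mathlib

/-!
Adding the points one at a time, the Schur complement of the last diagonal entry of
`K_t + σ_w² I` is `σ_w² + σ_{t-1}²(z_t)`, so
`det (I + σ_w⁻² K_N) = ∏ₜ (1 + σ_w⁻² σ_{t-1}²(z_t))`.
The same Schur complement taken in the positive semidefinite matrix `K_t + diag (σ_w² I, 0)`
shows `σ_{t-1}²(z_t) ≥ 0`, and `σ_{t-1}²(z_t) ≤ k(z_t, z_t) ≤ σ_max`. On `[0, σ_max]` the
concave function `x ↦ log (1 + σ_w⁻² x)` lies above its chord from `0`, which bounds each
`σ_{t-1}²(z_t)` by `σ_max / log (1 + σ_w⁻² σ_max)` times the logarithm of its factor.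
-/

open Matrix

/-- `k` is a symmetric positive semidefinite kernel: every finite Gram matrix is PSD. -/
def IsPSDKernel {E : Type*} (k : E → E → ℝ) : Prop :=
  (∀ z w, k z w = k w z) ∧
    ∀ (m : ℕ) (v : Fin m → E) (c : Fin m → ℝ),
      0 ≤ ∑ i, ∑ j, c i * c j * k (v i) (v j)

/-- The Gram matrix of a kernel at points `zs`. -/
noncomputable def gramMatrix {E : Type*} (k : E → E → ℝ) {m : ℕ} (zs : Fin m → E) :
    Matrix (Fin m) (Fin m) ℝ :=
  Matrix.of fun i j => k (zs i) (zs j)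

/-- The Gaussian process posterior variance at `z` given data points `zs` and
noise variance `σw²`: `σ²(z) = k(z,z) − k_v(z)ᵀ (K + σw² I)⁻¹ k_v(z)`. -/
noncomputable def postVar {E : Type*} (k : E → E → ℝ) (σw : ℝ) {m : ℕ} (zs : Fin m → E)
    (z : E) : ℝ :=
  k z z - (fun i => k (zs i) z) ⬝ᵥ
    ((gramMatrix k zs + σw ^ 2 • (1 : Matrix (Fin m) (Fin m) ℝ))⁻¹ *ᵥ (fun i => k (zs i) z))

section GramMatrix

variable {E : Type*} {k : E → E → ℝ}

lemma dotProduct_gramMatrix_mulVec {m : ℕ} (v : Fin m → E) (x : Fin m → ℝ) :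
    x ⬝ᵥ (gramMatrix k v *ᵥ x) = ∑ i, ∑ j, x i * x j * k (v i) (v j) := by
  simp only [dotProduct, mulVec, gramMatrix, of_apply, Finset.mul_sum]
  exact Finset.sum_congr rfl fun i _ => Finset.sum_congr rfl fun j _ => by ring

lemma IsPSDKernel.posSemidef_gramMatrix (hk : IsPSDKernel k) {m : ℕ} (v : Fin m → E) :
    (gramMatrix k v).PosSemidef := by
  refine posSemidef_iff_dotProduct_mulVec.mpr ⟨?_, fun x => ?_⟩
  · ext i j
    exact hk.1 (v j) (v i)
  · simpa only [star_trivial, dotProduct_gramMatrix_mulVec] using hk.2 m v x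

lemma IsPSDKernel.posDef_gramMatrix_add_smul_one (hk : IsPSDKernel k) {σw : ℝ} (hσw : σw ≠ 0)
    {m : ℕ} (v : Fin m → E) : (gramMatrix k v + σw ^ 2 • (1 : Matrix (Fin m) (Fin m) ℝ)).PosDef :=
  (PosDef.one.smul (by positivity)).posSemidef_add (hk.posSemidef_gramMatrix v)

lemma gramMatrix_snoc_submatrix (hsymm : ∀ z w, k z w = k w z) {m : ℕ} (v : Fin m → E)
    (z : E) :
    (gramMatrix k (Fin.snoc v z : Fin (m + 1) → E)).submatrix finSumFinEquiv finSumFinEquiv =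
      fromBlocks (gramMatrix k v) (replicateCol (Fin 1) fun i => k (v i) z)
        (replicateCol (Fin 1) fun i => k (v i) z)ᴴ (gramMatrix k fun _ : Fin 1 => z) := by
  have hinit (i : Fin m) : finSumFinEquiv (Sum.inl i : Fin m ⊕ Fin 1) = Fin.castSucc i := rfl
  have hlast : finSumFinEquiv (Sum.inr 0 : Fin m ⊕ Fin 1) = Fin.last m := rfl
  ext (i | i) (j | j) <;>
    simp only [submatrix_apply, fromBlocks_apply₁₁, fromBlocks_apply₁₂, fromBlocks_apply₂₁,
      fromBlocks_apply₂₂, Fin.subsingleton_one.elim _ 0, hinit, hlast] <;>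
    simp [gramMatrix, hsymm z]

lemma conjTranspose_replicateCol_mul_mul_replicateCol {m : Type*} [Fintype m] (A : Matrix m m ℝ)
    (c : m → ℝ) :
    (replicateCol (Fin 1) c)ᴴ * A * replicateCol (Fin 1) c = of fun _ _ => c ⬝ᵥ (A *ᵥ c) := by
  rw [Matrix.mul_assoc, ← replicateCol_mulVec, conjTranspose_replicateCol, star_trivial,
    replicateRow_mul_replicateCol]

end GramMatrix

section PosteriorVariance

variable {E : Type*} {k : E → E → ℝ} {σw : ℝ}

lemma gramMatrix_snoc_add_smul_one_submatrix (hsymm : ∀ z w, k z w = k w z) {m : ℕ}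
    (v : Fin m → E) (z : E) :
    (gramMatrix k (Fin.snoc v z : Fin (m + 1) → E) + σw ^ 2 • 1).submatrix finSumFinEquiv
        finSumFinEquiv =
      fromBlocks (gramMatrix k v + σw ^ 2 • 1) (replicateCol (Fin 1) fun i => k (v i) z)
        (replicateCol (Fin 1) fun i => k (v i) z)ᴴ
        (gramMatrix k (fun _ : Fin 1 => z) + σw ^ 2 • 1) := by
  change (gramMatrix k (Fin.snoc v z : Fin (m + 1) → E)).submatrix finSumFinEquiv
      finSumFinEquiv +
    σw ^ 2 • (1 : Matrix (Fin (m + 1)) (Fin (m + 1)) ℝ).submatrix finSumFinEquiv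
      finSumFinEquiv = _
  rw [submatrix_one_equiv, gramMatrix_snoc_submatrix hsymm, ← fromBlocks_one, fromBlocks_smul,
    fromBlocks_add]
  simp

lemma schurComplement_gramMatrix_snoc_add_smul_one {m : ℕ} (v : Fin m → E) (z : E) :
    gramMatrix k (fun _ : Fin 1 => z) + σw ^ 2 • 1 -
        (replicateCol (Fin 1) fun i => k (v i) z)ᴴ * (gramMatrix k v + σw ^ 2 • 1)⁻¹ *
          replicateCol (Fin 1) (fun i => k (v i) z) =
      of fun _ _ => σw ^ 2 + postVar k σw v z := by
  rw [conjTranspose_replicateCol_mul_mul_replicateCol]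
  ext i j
  simp only [gramMatrix, Fin.subsingleton_one.elim i j, Matrix.sub_apply, Matrix.add_apply,
    of_apply, Matrix.smul_apply, one_apply_eq, smul_eq_mul, mul_one, postVar]
  ring

lemma det_gramMatrix_snoc_add_smul_one (hk : IsPSDKernel k) (hσw : σw ≠ 0) {m : ℕ}
    (v : Fin m → E) (z : E) :
    det (gramMatrix k (Fin.snoc v z : Fin (m + 1) → E) + σw ^ 2 • 1) =
      det (gramMatrix k v + σw ^ 2 • 1) * (σw ^ 2 + postVar k σw v z) := by
  have := (hk.posDef_gramMatrix_add_smul_one hσw v).isUnit.invertible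
  rw [← det_submatrix_equiv_self finSumFinEquiv, gramMatrix_snoc_add_smul_one_submatrix hk.1,
    det_fromBlocks₁₁, invOf_eq_nonsing_inv, schurComplement_gramMatrix_snoc_add_smul_one,
    det_fin_one, of_apply]

lemma postVar_nonneg (hk : IsPSDKernel k) (hσw : σw ≠ 0) {m : ℕ} (v : Fin m → E) (z : E) :
    0 ≤ postVar k σw v z := by
  set A := gramMatrix k v + σw ^ 2 • (1 : Matrix (Fin m) (Fin m) ℝ)
  set B := replicateCol (Fin 1) fun i => k (v i) z
  have hA : A.PosDef := hk.posDef_gramMatrix_add_smul_one hσw v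
  have := hA.isUnit.invertible
  have hdiag : (fromBlocks (σw ^ 2 • 1 : Matrix (Fin m) (Fin m) ℝ) 0 0
      (0 : Matrix (Fin 1) (Fin 1) ℝ)).PosSemidef := by
    rw [smul_one_eq_diagonal, ← diagonal_zero, fromBlocks_diagonal, posSemidef_diagonal_iff]
    rintro (i | i) <;> simp [sq_nonneg]
  have hblocks : (fromBlocks A B Bᴴ (gramMatrix k fun _ : Fin 1 => z)).PosSemidef := by
    have hsum := ((hk.posSemidef_gramMatrix (Fin.snoc v z : Fin (m + 1) → E)).submatrix
      finSumFinEquiv).add hdiag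
    rwa [gramMatrix_snoc_submatrix hk.1, fromBlocks_add, add_zero, add_zero, add_zero] at hsum
  have hschur := ((PosDef.fromBlocks₁₁ B _ hA).1 hblocks).diag_nonneg (i := 0)
  rw [conjTranspose_replicateCol_mul_mul_replicateCol, Matrix.sub_apply, of_apply] at hschur
  exact hschur

lemma postVar_le (hk : IsPSDKernel k) (hσw : σw ≠ 0) {m : ℕ} (v : Fin m → E) (z : E) :
    postVar k σw v z ≤ k z z := by
  have h := (hk.posDef_gramMatrix_add_smul_one hσw v).inv.posSemidef.dotProduct_mulVec_nonneg
    (fun i => k (v i) z)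
  rw [star_trivial] at h
  exact sub_le_self _ h

lemma det_gramMatrix_add_smul_one_eq_prod (hk : IsPSDKernel k) (hσw : σw ≠ 0) {m : ℕ}
    (v : Fin m → E) :
    det (gramMatrix k v + σw ^ 2 • 1) =
      ∏ t : Fin m,
        (σw ^ 2 + postVar k σw (fun i : Fin t.val => v (Fin.castLE t.isLt.le i)) (v t)) := by
  induction m with
  | zero => simp
  | succ m ih =>
    rw [← Fin.snoc_init_self v, det_gramMatrix_snoc_add_smul_one hk hσw, ih,
      Fin.prod_univ_castSucc]
    simp only [Fin.snoc_init_self]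
    -- the prefixes of `Fin.init v` are those of `v`, up to `Fin.castLE` and `Fin.castSucc`
    rfl

lemma det_one_add_smul_gramMatrix_eq_prod (hk : IsPSDKernel k) (hσw : σw ≠ 0) {m : ℕ}
    (v : Fin m → E) :
    det (1 + (σw ^ 2)⁻¹ • gramMatrix k v) =
      ∏ t : Fin m, (1 + (σw ^ 2)⁻¹ *
        postVar k σw (fun i : Fin t.val => v (Fin.castLE t.isLt.le i)) (v t)) := by
  have hσw2 : σw ^ 2 ≠ 0 := pow_ne_zero 2 hσw
  rw [show 1 + (σw ^ 2)⁻¹ • gramMatrix k v = (σw ^ 2)⁻¹ • (gramMatrix k v + σw ^ 2 • 1) by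
      rw [smul_add, smul_smul, inv_mul_cancel₀ hσw2, one_smul, add_comm],
    det_smul, det_gramMatrix_add_smul_one_eq_prod hk hσw, Fintype.card_fin, ← Fin.prod_const m,
    ← Finset.prod_mul_distrib]
  simp only [mul_add, inv_mul_cancel₀ hσw2]

end PosteriorVariance

lemma le_div_log_one_add_mul_mul_log_one_add {c M s : ℝ} (hc : 0 < c) (hM : 0 < M)
    (hs₀ : 0 ≤ s) (hsM : s ≤ M) : s ≤ M / Real.log (1 + c * M) * Real.log (1 + c * s) := by
  have hlog : 0 < Real.log (1 + c * M) := Real.log_pos (by nlinarith)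
  have hconc := strictConcaveOn_log_Ioi.concaveOn.2 (Set.mem_Ioi.2 one_pos)
    (Set.mem_Ioi.2 (by positivity : (0 : ℝ) < 1 + c * M))
    (sub_nonneg.2 ((div_le_one hM).2 hsM)) (div_nonneg hs₀ hM.le) (sub_add_cancel 1 (s / M))
  have hpoint : (1 - s / M) • (1 : ℝ) + (s / M) • (1 + c * M) = 1 + c * s := by
    simp only [smul_eq_mul]
    field_simp
    ring
  rw [hpoint, smul_eq_mul, smul_eq_mul, Real.log_one, mul_zero, zero_add] at hconc
  rw [div_mul_eq_mul_div, le_div_iff₀ hlog]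
  calc s * Real.log (1 + c * M) = M * (s / M * Real.log (1 + c * M)) := by field_simp
    _ ≤ M * Real.log (1 + c * s) := by gcongr

theorem stmt_12_general (dz N : ℕ)
    (σw σmax : ℝ) (hσw : 0 < σw) (hσmax : 0 < σmax)
    (k : EuclideanSpace ℝ (Fin dz) → EuclideanSpace ℝ (Fin dz) → ℝ)
    (hk : IsPSDKernel k)
    (hkbdd : ∀ z : EuclideanSpace ℝ (Fin dz), k z z ≤ σmax)
    (zs : Fin N → EuclideanSpace ℝ (Fin dz)) :
    ∑ t : Fin N, postVar k σw (fun i : Fin t.val => zs (Fin.castLE t.isLt.le i)) (zs t) ≤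
      σmax / Real.log (1 + (σw ^ 2)⁻¹ * σmax) *
        Real.log (Matrix.det (1 + (σw ^ 2)⁻¹ • gramMatrix k zs)) := by
  have hσw' : σw ≠ 0 := hσw.ne'
  have hc : 0 < (σw ^ 2)⁻¹ := by positivity
  rw [det_one_add_smul_gramMatrix_eq_prod hk hσw', Real.log_prod fun t _ => by
      have := postVar_nonneg hk hσw' (fun i : Fin t.val => zs (Fin.castLE t.isLt.le i)) (zs t)
      positivity, Finset.mul_sum]
  exact Finset.sum_le_sum fun t _ => le_div_log_one_add_mul_mul_log_one_add hc hσmax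
    (postVar_nonneg hk hσw' _ _) ((postVar_le hk hσw' _ _).trans (hkbdd _))

/-- Sum of sequential GP posterior variances is bounded by a multiple of the information gain:
`∑_{t=1}^N σ_{t−1}²(z_t) ≤ (σ_max / log(1 + σ_w⁻² σ_max)) · log det(I + σ_w⁻² K_N)`. -/
theorem stmt_12 (dz N : ℕ) (hdz : 1 ≤ dz) (hN : 1 ≤ N)
    (σw σmax : ℝ) (hσw : 0 < σw) (hσmax : 0 < σmax)
    (k : EuclideanSpace ℝ (Fin dz) → EuclideanSpace ℝ (Fin dz) → ℝ)
    (hk : IsPSDKernel k)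
    (hkbdd : ∀ z : EuclideanSpace ℝ (Fin dz), k z z ≤ σmax)
    (zs : Fin N → EuclideanSpace ℝ (Fin dz)) :
    ∑ t : Fin N, postVar k σw (fun i : Fin t.val => zs (Fin.castLE t.isLt.le i)) (zs t) ≤
      σmax / Real.log (1 + (σw ^ 2)⁻¹ * σmax) *
        Real.log (Matrix.det (1 + (σw ^ 2)⁻¹ • gramMatrix k zs)) :=
  stmt_12_general dz N σw σmax hσw hσmax k hk hkbdd zs
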